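/- Let f : I ⊂ ℝ\{0} → ℝ be differentiable on the interior of I, a, b ∈ I with 0 < a < b, and f' integrable on [a,b]. Then (f(a)+f(b))/2 − (ab/(b-a)) ∫_a^b f(x)/x² dx = (ab(b-a)/2) ∫_0^1 (1-2t)/(tb+(1-t)a)² · f'(ab/(tb+(1-t)a)) dt. -/

import Mathlib

/-!
Substituting `x = φ t` with `1 / φ t = t / a + (1 - t) / b` turns the right-hand side into
`(1 / (2 (b - a))) ∫_a^b (a + b - 2ab/x) f'(x) dx`, because `a + b - 2ab / φ t = (b - a)(1 - 2t)`
and `|φ'| = ab(b - a) / (tb + (1 - t)a)²`. Integrating by parts against `x ↦ a + b - 2ab/x`,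
which takes the values `∓(b - a)` at the endpoints and has derivative `2ab/x²`, gives the left-hand side.
The substitution is done with the measure-theoretic change of variables for an injective map,
so no integrability of `f' ∘ φ` has to be established first.
-/

open intervalIntegral MeasureTheory Set

noncomputable def harmonicInterp (a b t : ℝ) : ℝ := a * b / (t * b + (1 - t) * a)

section
variable {a b : ℝ}

theorem hasDerivAt_harmonicInterp {t : ℝ} (ht : t * b + (1 - t) * a ≠ 0) :
    HasDerivAt (harmonicInterp a b) (-(a * b * (b - a)) / (t * b + (1 - t) * a) ^ 2) t := by
  have hden : HasDerivAt (fun s : ℝ => s * b + (1 - s) * a) (b - a) t :=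
    (((hasDerivAt_id t).mul_const b).add
      (((hasDerivAt_const t (1 : ℝ)).sub (hasDerivAt_id t)).mul_const a)).congr_deriv (by ring)
  exact ((hasDerivAt_const t (a * b)).div hden ht).congr_deriv (by ring)

theorem harmonicInterp_injective (ha : a ≠ 0) (hb : b ≠ 0) (hab : a ≠ b) :
    Function.Injective (harmonicInterp a b) := by
  intro s t hst
  have hba : b - a ≠ 0 := sub_ne_zero.2 hab.symm
  suffices s * b + (1 - s) * a = t * b + (1 - t) * a by
    apply mul_right_cancel₀ hba; linear_combination this
  unfold harmonicInterp at hst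
  by_cases hs : s * b + (1 - s) * a = 0
  · by_cases ht : t * b + (1 - t) * a = 0
    · rw [hs, ht]
    · rw [hs, div_zero, eq_comm, div_eq_zero_iff] at hst
      exact absurd hst (by simp [ha, hb, ht])
  · by_cases ht : t * b + (1 - t) * a = 0
    · rw [ht, div_zero, div_eq_zero_iff] at hst
      exact absurd hst (by simp [ha, hb, hs])
    · rw [div_eq_div_iff hs ht] at hst
      exact (mul_left_cancel₀ (mul_ne_zero ha hb) hst).symm

theorem harmonicInterp_zero (ha : a ≠ 0) : harmonicInterp a b 0 = b := by
  simp [harmonicInterp, ha]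

theorem harmonicInterp_one (hb : b ≠ 0) : harmonicInterp a b 1 = a := by
  simp [harmonicInterp, hb]

theorem image_harmonicInterp_Icc (ha : 0 < a) (hab : a ≤ b) :
    harmonicInterp a b '' Icc 0 1 = Icc a b := by
  have hb : 0 < b := ha.trans_le hab
  refine Subset.antisymm ?_ ?_
  · rintro _ ⟨t, ⟨ht0, ht1⟩, rfl⟩
    have hlo : a ≤ t * b + (1 - t) * a := by nlinarith
    have hhi : t * b + (1 - t) * a ≤ b := by nlinarith
    have hpos : 0 < t * b + (1 - t) * a := ha.trans_le hlo
    constructor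
    · rw [harmonicInterp, le_div_iff₀ hpos]; nlinarith
    · rw [harmonicInterp, div_le_iff₀ hpos]; nlinarith
  · have hcont : ContinuousOn (harmonicInterp a b) (Icc 0 1) := fun t ⟨ht0, ht1⟩ =>
      (hasDerivAt_harmonicInterp (by nlinarith)).continuousAt.continuousWithinAt
    simpa [harmonicInterp_zero ha.ne', harmonicInterp_one hb.ne'] using
      intermediate_value_Icc' zero_le_one hcont

theorem add_sub_two_mul_div_harmonicInterp (ha : a ≠ 0) (hb : b ≠ 0) (t : ℝ) :
    a + b - 2 * a * b / harmonicInterp a b t = (b - a) * (1 - 2 * t) := by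
  unfold harmonicInterp
  by_cases ht : t * b + (1 - t) * a = 0
  · rw [ht, div_zero, div_zero]; linear_combination 2 * ht
  · field_simp; ring

theorem integral_harmonicInterp_jacobian_mul (ha : 0 < a) (hab : a < b) (g : ℝ → ℝ) :
    ∫ t in (0 : ℝ)..1, a * b * (b - a) / (t * b + (1 - t) * a) ^ 2 * g (harmonicInterp a b t) =
      ∫ x in a..b, g x := by
  have hden : ∀ t ∈ Icc (0 : ℝ) 1, 0 < t * b + (1 - t) * a := fun t ⟨ht0, ht1⟩ => by nlinarith
  rw [integral_of_le zero_le_one, integral_of_le hab.le, ← integral_Icc_eq_integral_Ioc,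
    ← integral_Icc_eq_integral_Ioc, ← image_harmonicInterp_Icc ha hab.le,
    integral_image_eq_integral_abs_deriv_smul measurableSet_Icc
      (fun t ht => (hasDerivAt_harmonicInterp (hden t ht).ne').hasDerivWithinAt)
      (harmonicInterp_injective ha.ne' (ha.trans hab).ne' hab.ne).injOn]
  refine setIntegral_congr_fun measurableSet_Icc fun t ht => ?_
  have hc : 0 < a * b * (b - a) := by have := ha.trans hab; positivity
  rw [smul_eq_mul, neg_div, abs_neg, abs_of_pos (by have := hden t ht; positivity)]

theorem integral_sub_two_mul_div_mul_deriv {f f' : ℝ → ℝ} (ha : 0 < a) (hb : 0 < b)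
    (hf : ∀ x ∈ uIcc a b, HasDerivAt f (f' x) x) (hf' : IntervalIntegrable f' volume a b) :
    ∫ x in a..b, (a + b - 2 * a * b / x) * f' x =
      (b - a) * (f a + f b) - 2 * a * b * ∫ x in a..b, f x / x ^ 2 := by
  have hpos : ∀ x ∈ uIcc a b, 0 < x := fun x hx => (lt_min ha hb).trans_le hx.1
  have hu : ∀ x ∈ uIcc a b,
      HasDerivAt (fun x => a + b - 2 * a * b / x) (2 * a * b / x ^ 2) x := fun x hx =>
    ((hasDerivAt_const x (a + b)).sub ((hasDerivAt_const x (2 * a * b)).div (hasDerivAt_id x)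
      (hpos x hx).ne')).congr_deriv (by simp only [id]; field_simp; ring)
  have hu' : IntervalIntegrable (fun x => 2 * a * b / x ^ 2) volume a b :=
    (continuousOn_const.div (continuousOn_pow 2) fun x hx =>
      (pow_pos (hpos x hx) 2).ne').intervalIntegrable
  rw [integral_mul_deriv_eq_deriv_mul hu hf hu' hf', ← intervalIntegral.integral_const_mul]
  have hJ : ∫ x in a..b, 2 * a * b / x ^ 2 * f x = ∫ x in a..b, 2 * a * b * (f x / x ^ 2) :=
    integral_congr fun x _ => by ring
  rw [hJ]
  field_simp
  ring

end

theorem trapezoid_identity_harmonic_general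
    (f : ℝ → ℝ) (I : Set ℝ) (a b : ℝ)
    (ha : 0 < a) (hab : a < b)
    (hdiff : DifferentiableOn ℝ f (interior I))
    (hsub : Set.Icc a b ⊆ interior I)
    (hint : IntervalIntegrable (deriv f) volume a b) :
    (f a + f b) / 2 - (a * b / (b - a)) * ∫ x in a..b, f x / x ^ 2 =
      (a * b * (b - a) / 2) *
        ∫ t in (0:ℝ)..1, (1 - 2 * t) / (t * b + (1 - t) * a) ^ 2 *
          deriv f (a * b / (t * b + (1 - t) * a)) := by
  have hb : 0 < b := ha.trans hab
  have hba : 0 < b - a := sub_pos.2 hab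
  have hf : ∀ x ∈ uIcc a b, HasDerivAt f (deriv f x) x := fun x hx =>
    (hdiff.differentiableAt (isOpen_interior.mem_nhds (hsub (uIcc_of_le hab.le ▸ hx)))).hasDerivAt
  have hintegrand : ∀ t : ℝ, (1 - 2 * t) / (t * b + (1 - t) * a) ^ 2 *
      deriv f (a * b / (t * b + (1 - t) * a)) =
        a * b * (b - a) / (t * b + (1 - t) * a) ^ 2 *
          ((a + b - 2 * a * b / harmonicInterp a b t) * deriv f (harmonicInterp a b t) /
            (a * b * (b - a) * (b - a))) := fun t => by
    rw [add_sub_two_mul_div_harmonicInterp ha.ne' hb.ne', harmonicInterp]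
    field_simp
  simp_rw [hintegrand]
  rw [integral_harmonicInterp_jacobian_mul ha hab
      fun x => (a + b - 2 * a * b / x) * deriv f x / (a * b * (b - a) * (b - a)),
    intervalIntegral.integral_div,
    integral_sub_two_mul_div_mul_deriv ha hb hf hint]
  field_simp

theorem trapezoid_identity_harmonic
    (f : ℝ → ℝ) (I : Set ℝ) (h0 : (0:ℝ) ∉ I) (a b : ℝ) (haI : a ∈ I) (hbI : b ∈ I)
    (ha : 0 < a) (hab : a < b)
    (hdiff : DifferentiableOn ℝ f (interior I))
    (hsub : Set.Icc a b ⊆ interior I)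
    (hint : IntervalIntegrable (deriv f) volume a b) :
    (f a + f b) / 2 - (a * b / (b - a)) * ∫ x in a..b, f x / x ^ 2 =
      (a * b * (b - a) / 2) *
        ∫ t in (0:ℝ)..1, (1 - 2 * t) / (t * b + (1 - t) * a) ^ 2 *
          deriv f (a * b / (t * b + (1 - t) * a)) :=
  trapezoid_identity_harmonic_general f I a b ha hab hdiff hsub hint
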